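/- Let I be an ad-nilpotent ideal in gl_{n+1} and P_I the unit interval order on {1,...,n+1} defined by i ≺ j iff t_{ij} ∈ I. Then the Gerstenhaber partition λ_I equals the Greene–Kleitman partition of the poset P_I: for every k, λ_{I,1} + ... + λ_{I,k} is the maximum cardinality of a union of k chains in P_I. -/

import Mathlib

/-- An upper order ideal of matrix positions: `I ⊆ {(i,j) : 1 ≤ i < j ≤ n+1}` with
`(i,j) ∈ I`, `i' ≤ i`, `j ≤ j'`, `i' < j'` implying `(i',j') ∈ I`. -/
def IsMatrixIdeal (n : ℕ) (I : Finset (ℕ × ℕ)) : Prop :=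
  (∀ p ∈ I, 1 ≤ p.1 ∧ p.1 < p.2 ∧ p.2 ≤ n + 1) ∧
  (∀ p ∈ I, ∀ q : ℕ × ℕ, 1 ≤ q.1 → q.1 ≤ p.1 → p.2 ≤ q.2 → q.2 ≤ n + 1 → q ∈ I)


/-- The ad-nilpotent ideal of `gl_{n+1}(ℂ)` spanned by the elementary matrices
`t_{ij}` for `(i,j) ∈ I` (1-indexed positions). -/
noncomputable def idealSubmoduleM (n : ℕ) (I : Finset (ℕ × ℕ)) :
    Submodule ℂ (Matrix (Fin (n + 1)) (Fin (n + 1)) ℂ) :=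
  Submodule.span ℂ
    {m | ∃ p ∈ I, m = Matrix.of (fun a b : Fin (n + 1) =>
      if (a : ℕ) + 1 = p.1 ∧ (b : ℕ) + 1 = p.2 then (1 : ℂ) else 0)}

/-- `C` is a chain in the unit interval order `P_I` on `{1, …, n+1}` defined by
`i ≺ j` iff `(i,j) ∈ I`: any two distinct elements are comparable. -/
def IsChainInP (n : ℕ) (I : Finset (ℕ × ℕ)) (C : Finset ℕ) : Prop :=
  C ⊆ Finset.Icc 1 (n + 1) ∧
  ∀ a ∈ C, ∀ b ∈ C, a ≠ b → (a, b) ∈ I ∨ (b, a) ∈ I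

/-!
Call `[b, c] ⊆ [1, n + 1]` with `(b, c) ∉ I` a window; as `I` is an upper order ideal, a window is
an antichain of `P_I`. Fix `k` and scan `1, …, n + 1`, keeping a point unless this would put
`k + 1` kept points into one window. Kept points `u_j, u_{j+k}` that are `k` apart are comparable,
so the kept set `U` is a union of `k` chains, and the staircase `Σ_j t_{u_j, u_{j+k}}` lies in the
ideal with `rank x^p ≥ |U| - k p`; the rank bound at `p = λ_{k+1}` gives `|U| ≤ λ_1 + ⋯ + λ_k`.
Conversely, the windows at which the scan rejects points give `m` antichains whose union `S`
satisfies `k m + n + 1 ≤ |S| + |U|`. A union of `k` chains meets `S` in at most `k m` points, and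
`rank x^m ≤ n + 1 - |S|` for every `x` in the ideal: `x` is supported on `P_I`, so each factor `x`
disposes of one layer of maximal elements of `S`, and there are at most `m` layers. Taking `x` generic, `λ_1 + ⋯ + λ_k ≤ k m + rank x^m ≤ |U|`.
-/

open Finset

def ChainsCardLE {α : Type*} (r : α → α → Prop) (S : Finset α) (m : ℕ) : Prop :=
  ∀ C ⊆ S, IsChain r (C : Set α) → #C ≤ m

section ChainsCardLE

variable {α β : Type*} {r : α → α → Prop} {S T : Finset α} {m m' : ℕ}

theorem ChainsCardLE.eq_empty (hS : ChainsCardLE r S 0) : S = ∅ := by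
  by_contra hne
  obtain ⟨s, hs⟩ := nonempty_iff_ne_empty.2 hne
  simpa using hS {s} (singleton_subset_iff.2 hs) (by simp)

theorem ChainsCardLE.union [DecidableEq α] (hS : ChainsCardLE r S m) (hT : ChainsCardLE r T m') :
    ChainsCardLE r (S ∪ T) (m + m') := by
  intro C hC hchain
  calc #C ≤ #(C ∩ S ∪ C ∩ T) := card_le_card fun u hu => by
          rcases mem_union.1 (hC hu) with h | h <;> simp [hu, h]
    _ ≤ #(C ∩ S) + #(C ∩ T) := card_union_le _ _
    _ ≤ m + m' := add_le_add
        (hS _ inter_subset_right (hchain.mono (by simp)))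
        (hT _ inter_subset_right (hchain.mono (by simp)))

theorem ChainsCardLE.of_map {f : β ↪ α} {S : Finset β} (h : ChainsCardLE r (S.map f) m) :
    ChainsCardLE (fun a b => r (f a) (f b)) S m := by
  intro C hCS hC
  rw [← card_map f]
  refine h _ (map_subset_map.2 hCS) ?_
  rintro _ hv _ hw hvw
  obtain ⟨a, ha, rfl⟩ := mem_map.1 hv
  obtain ⟨b, hb, rfl⟩ := mem_map.1 hw
  exact hC ha hb fun hab => hvw (hab ▸ rfl)

theorem card_biUnion_add_card_le {ι : Type*} [Fintype ι] [DecidableEq α] {X : Finset α}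
    {C : ι → Finset α} (hC : ∀ i, C i ⊆ X ∧ IsChain r (C i : Set α)) (hSX : S ⊆ X)
    (hS : ChainsCardLE r S m) : #(univ.biUnion C) + #S ≤ Fintype.card ι * m + #X := by
  have hin : #(univ.biUnion C ∩ S) ≤ Fintype.card ι * m :=
    calc #(univ.biUnion C ∩ S) ≤ ∑ i, #(C i ∩ S) := by
          rw [biUnion_inter]; exact card_biUnion_le
      _ ≤ ∑ _i : ι, m := sum_le_sum fun i _ =>
          hS _ inter_subset_right ((hC i).2.mono inter_subset_left)
      _ = Fintype.card ι * m := by rw [sum_const, card_univ, smul_eq_mul]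
  have hout : #(univ.biUnion C \ S) ≤ #(X \ S) :=
    card_le_card (sdiff_subset_sdiff (biUnion_subset.2 fun i _ => (hC i).1) subset_rfl)
  have := card_inter_add_card_sdiff (univ.biUnion C) S
  have := card_sdiff_add_card_eq_card hSX
  omega

end ChainsCardLE

namespace Matrix

theorem rank_add_le {m n K : Type*} [Fintype m] [Fintype n] [Field K] (A B : Matrix m n K) :
    (A + B).rank ≤ A.rank + B.rank := by
  rw [rank, rank, rank, mulVecLin_add]
  exact (Submodule.finrank_mono (LinearMap.range_add_le _ _)).trans
    (Submodule.finrank_add_le_finrank_add_finrank _ _)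

variable {ι K : Type*} [DecidableEq ι] [Field K]

variable (K) in
def coordProj (W : Finset ι) : Matrix ι ι K :=
  diagonal fun i => if i ∈ W then 1 else 0

theorem coordProj_union {A B : Finset ι} (h : Disjoint A B) :
    coordProj K (A ∪ B) = coordProj K A + coordProj K B := by
  rw [coordProj, coordProj, coordProj, diagonal_add]
  congr 1
  funext i
  by_cases hA : i ∈ A <;> by_cases hB : i ∈ B <;> simp_all [disjoint_left.1 h]

variable [Fintype ι]

theorem coordProj_univ : coordProj K (univ : Finset ι) = 1 := by
  simp [coordProj, ← diagonal_one]

theorem rank_coordProj_le (W : Finset ι) : (coordProj K W).rank ≤ #W := by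
  classical
  rw [coordProj, rank_diagonal, Fintype.card_subtype]
  exact card_le_card fun i => by simp +contextual

theorem mul_coordProj_eq {x : Matrix ι ι K} {T T' : Finset ι}
    (h : ∀ b ∈ T, ∀ a, x a b ≠ 0 → a ∈ T') :
    x * coordProj K T = coordProj K T' * x * coordProj K T := by
  ext a b
  simp only [coordProj, mul_diagonal, diagonal_mul]
  by_cases hb : b ∈ T
  · by_cases ha : a ∈ T'
    · simp [ha]
    · simp [ha, show x a b = 0 from by_contra fun hab => ha (h b hb a hab)]
  · simp [hb]

end Matrix

section ChainPeeling

variable {ι : Type*} [LinearOrder ι] {R : ι → ι → Prop}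

theorem IsChain.rel_max' (hlt : ∀ a b, R a b → a < b) {C : Finset ι} (hC : IsChain R (C : Set ι))
    (hne : C.Nonempty) {d : ι} (hd : d ∈ C) (hdc : d ≠ C.max' hne) : R d (C.max' hne) := by
  refine (hC hd (C.max'_mem hne) hdc).resolve_right fun h => ?_
  exact (hlt _ _ h).not_ge (C.le_max' d hd)

variable [IsTrans ι R]

theorem ChainsCardLE.sdiff_maximals (hlt : ∀ a b, R a b → a < b) {S : Finset ι} {m : ℕ}
    [DecidablePred fun a => ∀ s ∈ S, ¬R a s] (hS : ChainsCardLE R S (m + 1)) :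
    ChainsCardLE R (S \ S.filter fun a => ∀ s ∈ S, ¬R a s) m := by
  intro C hCS hC
  rcases C.eq_empty_or_nonempty with rfl | hne
  · simp
  set c := C.max' hne
  obtain ⟨hcS, hcA⟩ := mem_sdiff.1 (hCS (C.max'_mem hne))
  obtain ⟨s, hsS, hcs⟩ : ∃ s ∈ S, R c s := by simpa [hcS] using hcA
  have hsC : s ∉ C := fun hs => (hlt _ _ hcs).not_ge (C.le_max' s hs)
  have hchain : IsChain R (insert s C : Set ι) := hC.insert fun d hd hds => by
    by_cases hdc : d = c
    · exact Or.inr (hdc ▸ hcs)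
    · exact Or.inr (trans_of R (hC.rel_max' hlt hne hd hdc) hcs)
  have := hS (insert s C) (insert_subset hsS (hCS.trans sdiff_subset)) (by simpa using hchain)
  rw [card_insert_of_notMem hsC] at this
  omega

/-- `A` is the set of `R`-maximal elements of `S` and `O` the part of `W` strictly above `A`. -/
theorem exists_peeling (hlt : ∀ a b, R a b → a < b) {W S : Finset ι}
    (hW : ∀ b ∈ W, ∀ a, R a b → a ∈ W) (hSW : S ⊆ W) {m : ℕ} (hS : ChainsCardLE R S (m + 1)) :
    ∃ W' A O S' : Finset ι, W = W' ∪ A ∪ O ∧ Disjoint W' A ∧ Disjoint (W' ∪ A) O ∧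
      (∀ b ∈ W' ∪ A, ∀ a, R a b → a ∈ W') ∧ S' ⊆ W' ∧ #S' + #A = #S ∧
      ChainsCardLE R S' m := by
  classical
  set A := S.filter fun a => ∀ s ∈ S, ¬R a s
  set O := W.filter fun w => ∃ a ∈ A, R a w
  have hAS : A ⊆ S := filter_subset _ _
  have hA_max : ∀ a ∈ A, ∀ s ∈ S, ¬R a s := fun a ha => (mem_filter.1 ha).2
  have hOS : Disjoint S O := disjoint_left.2 fun s hs ho => by
    obtain ⟨a, ha, has⟩ := (mem_filter.1 ho).2
    exact hA_max a ha s hs has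
  refine ⟨W \ (A ∪ O), A, O, S \ A, ?_, ?_, ?_, ?_, ?_, card_sdiff_add_card_eq_card hAS,
    hS.sdiff_maximals hlt⟩
  · ext w
    have : w ∈ A → w ∈ W := fun h => hSW (hAS h)
    have : w ∈ O → w ∈ W := fun h => (mem_filter.1 h).1
    simp only [mem_union, mem_sdiff]
    tauto
  · exact disjoint_left.2 fun w hw => (notMem_union.1 (mem_sdiff.1 hw).2).1
  · exact disjoint_union_left.2
      ⟨disjoint_left.2 fun w hw => (notMem_union.1 (mem_sdiff.1 hw).2).2, hOS.mono_left hAS⟩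
  · intro b hb a hab
    have hbW : b ∈ W := by
      rcases mem_union.1 hb with h | h
      exacts [(mem_sdiff.1 h).1, hSW (hAS h)]
    have hb_not_above : ∀ a' ∈ A, ¬R a' b := fun a' ha' h => by
      rcases mem_union.1 hb with hb | hb
      · exact (notMem_union.1 (mem_sdiff.1 hb).2).2 (mem_filter.2 ⟨hbW, a', ha', h⟩)
      · exact hA_max a' ha' b (hAS hb) h
    refine mem_sdiff.2 ⟨hW b hbW a hab,
      notMem_union.2 ⟨fun ha => hb_not_above a ha hab, fun ha => ?_⟩⟩
    obtain ⟨a', ha', ha'a⟩ := (mem_filter.1 ha).2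
    exact hb_not_above a' ha' (trans_of R ha'a hab)
  · intro s hs
    obtain ⟨hsS, hsA⟩ := mem_sdiff.1 hs
    exact mem_sdiff.2 ⟨hSW hsS, notMem_union.2 ⟨hsA, disjoint_left.1 hOS hsS⟩⟩

end ChainPeeling

section RankBound

open Matrix

variable {ι K : Type*} [Fintype ι] [LinearOrder ι] [Field K]
  {R : ι → ι → Prop} [IsTrans ι R]

theorem rank_pow_mul_coordProj_add_card_le (hlt : ∀ a b, R a b → a < b) {x : Matrix ι ι K}
    (hx : ∀ a b, x a b ≠ 0 → R a b) (m : ℕ) {W S : Finset ι}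
    (hW : ∀ b ∈ W, ∀ a, R a b → a ∈ W) (hSW : S ⊆ W) (hS : ChainsCardLE R S m) :
    (x ^ m * coordProj K W).rank + #S ≤ #W := by
  induction m generalizing W S with
  | zero => simpa [hS.eq_empty] using rank_coordProj_le W
  | succ m ih =>
    obtain ⟨W', A, O, S', rfl, hW'A, hO, hdown, hS'W', hcard, hS'⟩ :=
      exists_peeling hlt hW hSW hS
    have hstep : x * coordProj K (W' ∪ A) = coordProj K W' * x * coordProj K (W' ∪ A) :=
      mul_coordProj_eq fun b hb a hab => hdown b hb a (hx a b hab)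
    have hlow : (x ^ (m + 1) * coordProj K (W' ∪ A)).rank ≤ (x ^ m * coordProj K W').rank := by
      rw [pow_succ, Matrix.mul_assoc, hstep, ← Matrix.mul_assoc, ← Matrix.mul_assoc,
        Matrix.mul_assoc (x ^ m * _)]
      exact rank_mul_le_left _ _
    have hup : (x ^ (m + 1) * coordProj K O).rank ≤ #O :=
      (rank_mul_le_right _ _).trans (rank_coordProj_le O)
    have ih' := ih (fun b hb a hab => hdown b (mem_union_left _ hb) a hab) hS'W' hS'
    calc (x ^ (m + 1) * coordProj K (W' ∪ A ∪ O)).rank + #S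
        ≤ (x ^ m * coordProj K W').rank + #O + (#S' + #A) := by
          rw [coordProj_union hO, Matrix.mul_add, hcard]
          exact Nat.add_le_add_right ((rank_add_le _ _).trans (add_le_add hlow hup)) _
      _ ≤ #(W' ∪ A ∪ O) := by
          rw [card_union_of_disjoint hO, card_union_of_disjoint hW'A]
          omega

theorem rank_pow_add_card_le (hlt : ∀ a b, R a b → a < b) {x : Matrix ι ι K}
    (hx : ∀ a b, x a b ≠ 0 → R a b) {m : ℕ} {S : Finset ι} (hS : ChainsCardLE R S m) :
    (x ^ m).rank + #S ≤ Fintype.card ι := by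
  simpa [coordProj_univ] using
    rank_pow_mul_coordProj_add_card_le hlt hx m (fun _ _ _ _ => mem_univ _) (subset_univ S) hS

end RankBound

section ShiftMatrix

open Matrix

variable {ι K : Type*} [DecidableEq ι] [Field K] {L : ℕ} {e : Fin L → ι} {k : ℕ}

variable (K e k) in
def shiftMatrix : Matrix ι ι K :=
  of fun a b => if ∃ j j' : Fin L, (j' : ℕ) = j + k ∧ a = e j ∧ b = e j' then 1 else 0

theorem exists_of_shiftMatrix_ne_zero {a b : ι} (h : shiftMatrix K e k a b ≠ 0) :
    ∃ j j' : Fin L, (j' : ℕ) = j + k ∧ a = e j ∧ b = e j' := by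
  by_contra hn
  exact h (by simp [shiftMatrix, hn])

variable [Fintype ι]

theorem shiftMatrix_mulVec_single (he : Function.Injective e) {j j' : Fin L}
    (h : (j' : ℕ) = j + k) : shiftMatrix K e k *ᵥ Pi.single (e j') 1 = Pi.single (e j) 1 := by
  rw [mulVec_single_one]
  funext a
  have : (∃ i i' : Fin L, (i' : ℕ) = i + k ∧ a = e i ∧ e j' = e i') ↔ a = e j := by
    constructor
    · rintro ⟨i, i', hi, rfl, hj'⟩
      obtain rfl := he hj'
      rw [show i = j from Fin.ext (by omega)]
    · rintro rfl
      exact ⟨j, j', h, rfl, rfl⟩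
  simp [shiftMatrix, this, Pi.single_apply]

theorem single_mem_range_shiftMatrix_pow (he : Function.Injective e) (p : ℕ) (j : Fin L)
    (hj : j + k * p < L) :
    Pi.single (e j) 1 ∈ LinearMap.range (shiftMatrix K e k ^ p).mulVecLin := by
  induction p generalizing j with
  | zero => exact ⟨Pi.single (e j) 1, by simp⟩
  | succ p ih =>
    have hj' : (j : ℕ) + k + k * p < L := by rw [Nat.mul_succ] at hj; omega
    obtain ⟨v, hv⟩ := ih ⟨j + k, by omega⟩ hj'
    refine ⟨v, ?_⟩
    rw [mulVecLin_apply] at hv ⊢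
    rw [pow_succ', ← mulVec_mulVec, hv, shiftMatrix_mulVec_single he rfl]

theorem le_rank_shiftMatrix_pow_add (he : Function.Injective e) (p : ℕ) :
    L ≤ (shiftMatrix K e k ^ p).rank + k * p := by
  let f : Fin (L - k * p) → ι := fun i => e (Fin.castLE (Nat.sub_le _ _) i)
  have hf : Function.Injective f := he.comp (Fin.castLE_injective _)
  have hli : LinearIndependent K fun i => (Pi.single (f i) 1 : ι → K) := by
    simpa [Function.comp_def] using (Pi.basisFun K ι).linearIndependent.comp f hf
  have hspan : Submodule.span K (Set.range fun i => (Pi.single (f i) 1 : ι → K)) ≤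
      LinearMap.range (shiftMatrix K e k ^ p).mulVecLin :=
    Submodule.span_le.2 <| Set.range_subset_iff.2 fun i =>
      single_mem_range_shiftMatrix_pow he p _ (by simp; omega)
  have := Submodule.finrank_mono hspan
  rw [finrank_span_eq_card hli, Fintype.card_fin] at this
  rw [rank]
  omega

end ShiftMatrix

section Greedy

variable {n : ℕ} {I : Finset (ℕ × ℕ)} {k : ℕ}

variable (I k) in
def greedy : ℕ → Finset ℕ
  | 0 => ∅
  | a + 1 =>
    if ∀ b ∈ Icc 1 (a + 1), (b, a + 1) ∉ I → #(greedy a ∩ Icc b a) < k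
    then insert (a + 1) (greedy a) else greedy a

theorem greedy_subset_Icc (a : ℕ) : greedy I k a ⊆ Icc 1 a := by
  induction a with
  | zero => simp [greedy]
  | succ a ih =>
    have : Icc 1 a ⊆ Icc 1 (a + 1) := Icc_subset_Icc_right (Nat.le_succ a)
    rw [greedy]
    split_ifs
    · exact insert_subset (by simp) (ih.trans this)
    · exact ih.trans this

theorem greedy_mono : Monotone (greedy I k) :=
  monotone_nat_of_le_succ fun a => by
    rw [greedy]
    split_ifs
    exacts [subset_insert _ _, subset_rfl]

theorem greedy_inter_Icc_succ (a b : ℕ) :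
    greedy I k a ∩ Icc b (a + 1) = greedy I k a ∩ Icc b a := by
  ext u
  have := @greedy_subset_Icc I k a u
  simp only [mem_inter, mem_Icc] at this ⊢
  constructor
  · rintro ⟨hu, h⟩; exact ⟨hu, h.1, (this hu).2⟩
  · rintro ⟨hu, h⟩; exact ⟨hu, h.1, by omega⟩

theorem card_greedy_inter_Icc_le (hI : IsMatrixIdeal n I) {a b c : ℕ} (hb : 1 ≤ b)
    (hca : c ≤ a) (hc : c ≤ n + 1) (hbc : (b, c) ∉ I) : #(greedy I k a ∩ Icc b c) ≤ k := by
  induction a generalizing c with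
  | zero => simp [show c = 0 by omega, greedy]
  | succ a ih =>
    rcases Nat.lt_or_eq_of_le hca with hca' | rfl
    · refine (card_le_card fun u hu => ?_).trans (ih (by omega) hc hbc)
      rw [mem_inter, mem_Icc] at hu ⊢
      rw [greedy] at hu
      split_ifs at hu
      · exact ⟨(mem_insert.1 hu.1).resolve_left (by omega), hu.2⟩
      · exact hu
    rw [greedy]
    split_ifs with hkeep
    · by_cases hba : b ≤ a + 1
      · calc #(insert (a + 1) (greedy I k a) ∩ Icc b (a + 1))
            = #(insert (a + 1) (greedy I k a ∩ Icc b a)) := by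
              rw [insert_inter_of_mem (mem_Icc.2 ⟨hba, le_rfl⟩), greedy_inter_Icc_succ]
          _ ≤ #(greedy I k a ∩ Icc b a) + 1 := card_insert_le _ _
          _ ≤ k := hkeep b (mem_Icc.2 ⟨hb, hba⟩) hbc
      · simp [Icc_eq_empty_of_lt (not_le.1 hba)]
    · rw [greedy_inter_Icc_succ]
      exact ih le_rfl (by omega) fun h => hbc (hI.2 _ h _ hb le_rfl (by omega) hc)

theorem exists_window_of_notMem_greedy {r : ℕ} (hr : 1 ≤ r) (hrU : r ∉ greedy I k r) :
    ∃ b ∈ Icc 1 r, (b, r) ∉ I ∧ k ≤ #(greedy I k r ∩ Icc b r) := by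
  obtain ⟨a, rfl⟩ : ∃ a, r = a + 1 := ⟨r - 1, by omega⟩
  rw [greedy] at hrU ⊢
  split_ifs at hrU ⊢ with hkeep
  · exact absurd (mem_insert_self _ _) hrU
  · push Not at hkeep
    obtain ⟨b, hb, hbr, hcard⟩ := hkeep
    exact ⟨b, hb, hbr, by rwa [greedy_inter_Icc_succ]⟩

end Greedy

section AntichainCover

variable {n : ℕ} {I : Finset (ℕ × ℕ)}

theorem chainsCardLE_Icc_one (hI : IsMatrixIdeal n I) {b c : ℕ} (hb : 1 ≤ b) (hc : c ≤ n + 1)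
    (hbc : (b, c) ∉ I) : ChainsCardLE (fun u v => (u, v) ∈ I) (Icc b c) 1 := by
  intro C hC hchain
  refine card_le_one.2 fun u hu v hv => by_contra fun huv => ?_
  have hu' := mem_Icc.1 (hC hu)
  have hv' := mem_Icc.1 (hC hv)
  rcases hchain hu hv huv with h | h
  · exact hbc (hI.2 _ h _ hb hu'.1 hv'.2 hc)
  · exact hbc (hI.2 _ h _ hb hv'.1 hu'.2 hc)

/-- `S` is a union of `m` windows, each holding at least `k` points of the greedy set. -/
theorem exists_antichain_cover (hI : IsMatrixIdeal n I) (k : ℕ) {c : ℕ} (hc : c ≤ n + 1) :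
    ∃ (m : ℕ) (S : Finset ℕ), S ⊆ Icc 1 c ∧ ChainsCardLE (fun u v => (u, v) ∈ I) S m ∧
      k * m + c ≤ #S + #(greedy I k (n + 1) ∩ Icc 1 c) := by
  set U := greedy I k (n + 1)
  induction c using Nat.strong_induction_on with
  | _ c ih =>
  rcases c with _ | c
  · exact ⟨0, ∅, by simp, fun C hC _ => by simp [subset_empty.1 hC], by simp⟩
  have hIcc : Icc 1 (c + 1) = insert (c + 1) (Icc 1 c) :=
    (insert_Icc_right_eq_Icc_add_one (Nat.le_add_left 1 c)).symm
  by_cases hcU : c + 1 ∈ U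
  · obtain ⟨m, S, hSc, hS, hcount⟩ := ih c (by omega) (by omega)
    refine ⟨m, S, hSc.trans (Icc_subset_Icc_right (Nat.le_succ c)), hS, ?_⟩
    rw [hIcc, inter_insert_of_mem hcU, card_insert_of_notMem (by simp)]
    omega
  · obtain ⟨b, hb, hbc, hk⟩ := exists_window_of_notMem_greedy (Nat.le_add_left 1 c)
      fun h => hcU (greedy_mono hc h)
    rw [mem_Icc] at hb
    obtain ⟨m, S, hSb, hS, hcount⟩ := ih (b - 1) (by omega) (by omega)
    have hSdisj : Disjoint S (Icc b (c + 1)) := disjoint_left.2 fun u hu hu' => by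
      have := mem_Icc.1 (hSb hu); have := mem_Icc.1 hu'; omega
    have hsplit : U ∩ Icc 1 (c + 1) = U ∩ Icc 1 (b - 1) ∪ U ∩ Icc b (c + 1) := by
      rw [← inter_union_distrib_left]
      congr 1
      ext u; simp only [mem_union, mem_Icc]; omega
    have hdisj : Disjoint (U ∩ Icc 1 (b - 1)) (U ∩ Icc b (c + 1)) :=
      disjoint_left.2 fun u hu hu' => by
        have := mem_Icc.1 (mem_inter.1 hu).2; have := mem_Icc.1 (mem_inter.1 hu').2; omega
    have hwindow : k ≤ #(U ∩ Icc b (c + 1)) :=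
      hk.trans (card_le_card (inter_subset_inter_right (greedy_mono hc)))
    refine ⟨m + 1, S ∪ Icc b (c + 1), union_subset (hSb.trans (Icc_subset_Icc_right (by omega)))
      (Icc_subset_Icc_left hb.1), hS.union (chainsCardLE_Icc_one hI hb.1 hc hbc), ?_⟩
    rw [card_union_of_disjoint hSdisj, hsplit, card_union_of_disjoint hdisj, Nat.card_Icc,
      Nat.mul_succ]
    omega

end AntichainCover

section WindowChains

variable {n : ℕ} {I : Finset (ℕ × ℕ)} {k : ℕ} {U : Finset ℕ}

/-- Otherwise the window between the two points would hold `k + 1` points of `U`. -/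
theorem orderEmbOfFin_mem_of_window (hU : U ⊆ Icc 1 (n + 1))
    (hwin : ∀ b c, 1 ≤ b → c ≤ n + 1 → (b, c) ∉ I → #(U ∩ Icc b c) ≤ k)
    {j j' : Fin #U} (h : (j : ℕ) + k ≤ j') :
    (U.orderEmbOfFin rfl j, U.orderEmbOfFin rfl j') ∈ I := by
  set u := U.orderEmbOfFin rfl
  by_contra hni
  have hj := mem_Icc.1 (hU (U.orderEmbOfFin_mem rfl j))
  have hj' := mem_Icc.1 (hU (U.orderEmbOfFin_mem rfl j'))
  have hsub : (Icc j j').map u.toEmbedding ⊆ U ∩ Icc (u j) (u j') := fun v hv => by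
    obtain ⟨i, hi, rfl⟩ := mem_map.1 hv
    rw [mem_Icc] at hi
    exact mem_inter.2 ⟨U.orderEmbOfFin_mem rfl i, mem_Icc.2 ⟨u.monotone hi.1, u.monotone hi.2⟩⟩
  have := (card_le_card hsub).trans (hwin _ _ hj.1 hj'.2 hni)
  rw [card_map, Fin.card_Icc] at this
  omega

theorem add_le_of_mod_eq {k j j' : ℕ} (hlt : j < j') (hmod : j % k = j' % k) : j + k ≤ j' := by
  have := Nat.le_of_dvd (Nat.sub_pos_of_lt hlt) ((Nat.modEq_iff_dvd' hlt.le).1 hmod)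
  omega

/-- The `r`-th chain consists of the points of `U` whose index is `r` modulo `k`. -/
theorem exists_chains_biUnion_eq_of_window (hI : IsMatrixIdeal n I) (hU : U ⊆ Icc 1 (n + 1))
    (hwin : ∀ b c, 1 ≤ b → c ≤ n + 1 → (b, c) ∉ I → #(U ∩ Icc b c) ≤ k) :
    ∃ C : Fin k → Finset ℕ, (∀ r, IsChainInP n I (C r)) ∧ univ.biUnion C = U := by
  set u := U.orderEmbOfFin rfl
  rcases Nat.eq_zero_or_pos k with rfl | hk
  · refine ⟨Fin.elim0, Fin.rec0, (eq_empty_of_forall_notMem fun v hv => ?_).symm⟩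
    have hv' := mem_Icc.1 (hU hv)
    have := hwin v v hv'.1 hv'.2 fun h => (hI.1 _ h).2.1.false
    rw [Icc_self, inter_singleton_of_mem hv, card_singleton] at this
    omega
  refine ⟨fun r => (univ.filter fun j : Fin #U => (j : ℕ) % k = r).map u.toEmbedding,
    fun r => ⟨?_, ?_⟩, ?_⟩
  · intro v hv
    obtain ⟨j, -, rfl⟩ := mem_map.1 hv
    exact hU (U.orderEmbOfFin_mem rfl j)
  · intro v hv w hw hvw
    obtain ⟨j, hj, rfl⟩ := mem_map.1 hv
    obtain ⟨j', hj', rfl⟩ := mem_map.1 hw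
    simp only [mem_filter, mem_univ, true_and] at hj hj'
    rcases lt_or_gt_of_ne (fun h : j = j' => hvw (h ▸ rfl)) with h | h
    · exact Or.inl (orderEmbOfFin_mem_of_window hU hwin (add_le_of_mod_eq h (hj.trans hj'.symm)))
    · exact Or.inr (orderEmbOfFin_mem_of_window hU hwin (add_le_of_mod_eq h (hj'.trans hj.symm)))
  · ext v
    simp only [mem_biUnion, mem_univ, true_and, mem_map, mem_filter]
    constructor
    · rintro ⟨r, j, -, rfl⟩
      exact U.orderEmbOfFin_mem rfl j
    · intro hv
      obtain ⟨j, rfl⟩ : v ∈ Set.range u := by rwa [U.range_orderEmbOfFin]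
      exact ⟨⟨j % k, Nat.mod_lt _ hk⟩, j, rfl, rfl⟩

end WindowChains

section IdealMatrices

variable {n : ℕ} {I : Finset (ℕ × ℕ)} {k : ℕ} {U : Finset ℕ}

theorem mem_idealSubmoduleM_iff {x : Matrix (Fin (n + 1)) (Fin (n + 1)) ℂ} :
    x ∈ idealSubmoduleM n I ↔ ∀ a b, x a b ≠ 0 → ((a : ℕ) + 1, (b : ℕ) + 1) ∈ I := by
  constructor
  · intro hx
    induction hx using Submodule.span_induction with
    | mem y hy =>
      obtain ⟨p, hp, rfl⟩ := hy
      intro a b hab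
      simp only [Matrix.of_apply, ne_eq, ite_eq_right_iff, not_forall] at hab
      obtain ⟨⟨ha, hb⟩, -⟩ := hab
      rwa [ha, hb]
    | zero => simp
    | add y z _ _ hy hz =>
      intro a b hab
      by_contra hn
      exact hab (by simp [not_imp_comm.1 (hy a b) hn, not_imp_comm.1 (hz a b) hn])
    | smul c y _ hy =>
      intro a b hab
      exact hy a b (right_ne_zero_of_mul hab)
  · intro hx
    rw [Matrix.matrix_eq_sum_single x]
    refine Submodule.sum_mem _ fun a _ => Submodule.sum_mem _ fun b _ => ?_
    by_cases hab : x a b = 0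
    · simp [hab]
    rw [show Matrix.single a b (x a b) = x a b • Matrix.single a b 1 by simp]
    refine Submodule.smul_mem _ _ (Submodule.subset_span ⟨_, hx a b hab, ?_⟩)
    ext a' b'
    simp only [Matrix.single_apply, Matrix.of_apply, Fin.ext_iff, add_left_inj, eq_comm]

/-- The witness is the staircase matrix sending the `(j + k)`-th point of `U` to the `j`-th. -/
theorem exists_mem_idealSubmoduleM_card_le_rank_pow (hU : U ⊆ Icc 1 (n + 1))
    (hwin : ∀ b c, 1 ≤ b → c ≤ n + 1 → (b, c) ∉ I → #(U ∩ Icc b c) ≤ k) :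
    ∃ x ∈ idealSubmoduleM n I, ∀ p, #U ≤ (x ^ p).rank + k * p := by
  set u := U.orderEmbOfFin rfl
  have hu : ∀ j, 1 ≤ u j ∧ u j ≤ n + 1 := fun j => mem_Icc.1 (hU (U.orderEmbOfFin_mem rfl j))
  let e : Fin #U → Fin (n + 1) := fun j => ⟨u j - 1, by have := hu j; omega⟩
  have he : ∀ j, (e j : ℕ) + 1 = u j := fun j => Nat.sub_add_cancel (hu j).1
  have he_inj : Function.Injective e := fun j j' h => u.injective (by rw [← he, ← he, h])
  refine ⟨shiftMatrix ℂ e k, mem_idealSubmoduleM_iff.2 fun a b hab => ?_,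
    le_rank_shiftMatrix_pow_add he_inj⟩
  obtain ⟨j, j', hjj', rfl, rfl⟩ := exists_of_shiftMatrix_ne_zero hab
  rw [he, he]
  exact orderEmbOfFin_mem_of_window hU hwin hjj'.ge

theorem rank_pow_add_card_le_of_mem_idealSubmoduleM (hI : IsMatrixIdeal n I) {x : Matrix (Fin (n + 1)) (Fin (n + 1)) ℂ}
    (hx : x ∈ idealSubmoduleM n I) {m : ℕ} {S : Finset ℕ} (hS : S ⊆ Icc 1 (n + 1))
    (hSm : ChainsCardLE (fun u v => (u, v) ∈ I) S m) : (x ^ m).rank + #S ≤ n + 1 := by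
  let φ : Fin (n + 1) ↪ ℕ := ⟨fun i => i + 1, fun i j h => Fin.ext (Nat.add_right_cancel h)⟩
  have hφ : ∀ i, φ i = (i : ℕ) + 1 := fun _ => rfl
  let R : Fin (n + 1) → Fin (n + 1) → Prop := fun a b => (φ a, φ b) ∈ I
  have : IsTrans (Fin (n + 1)) R :=
    ⟨fun a b c hab hbc => hI.2 _ hbc _ (by simp [hφ]) (hI.1 _ hab).2.1.le le_rfl (hI.1 _ hbc).2.2⟩
  have hlt : ∀ a b, R a b → a < b := fun a b h => by
    have := (hI.1 _ h).2.1; rw [hφ, hφ] at this; omega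
  have hS' : (univ.filter fun i => φ i ∈ S).map φ = S := by
    ext v
    simp only [mem_map, mem_filter, mem_univ, true_and]
    refine ⟨fun ⟨i, hi, hiv⟩ => hiv ▸ hi, fun hv => ?_⟩
    have hv' := mem_Icc.1 (hS hv)
    have hφv : φ ⟨v - 1, by omega⟩ = v := by rw [hφ]; exact Nat.sub_add_cancel hv'.1
    exact ⟨_, by rwa [hφv], hφv⟩
  have hSm' : ChainsCardLE (fun u v => (u, v) ∈ I) ((univ.filter fun i => φ i ∈ S).map φ) m := by
    rwa [hS']
  have := rank_pow_add_card_le hlt (mem_idealSubmoduleM_iff.1 hx) hSm'.of_map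
  rwa [Fintype.card_fin, ← card_map φ, hS'] at this

end IdealMatrices

section PartitionSums

variable {lam : ℕ → ℕ} {ℓ : ℕ}

theorem sum_range_tsub_add_mul_eq (hmono : Antitone lam) (hzero : ∀ i ≥ ℓ, lam i = 0) (k : ℕ) :
    ∑ i ∈ range ℓ, (lam i - lam k) + k * lam k = ∑ i ∈ range k, lam i := by
  have hℓ : ∑ i ∈ range ℓ, (lam i - lam k) = ∑ i ∈ range (max k ℓ), (lam i - lam k) :=
    (eventually_constant_sum (fun i hi => by simp [hzero i hi]) (le_max_right _ _)).symm
  have hk : ∑ i ∈ range (max k ℓ), (lam i - lam k) = ∑ i ∈ range k, (lam i - lam k) :=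
    eventually_constant_sum (fun i hi => Nat.sub_eq_zero_of_le (hmono hi)) (le_max_left _ _)
  rw [hℓ, hk, show k * lam k = ∑ _i ∈ range k, lam k by simp, ← sum_add_distrib]
  exact sum_congr rfl fun i hi => Nat.sub_add_cancel (hmono (mem_range.1 hi).le)

theorem sum_range_le_mul_add_sum_tsub (hzero : ∀ i ≥ ℓ, lam i = 0) (k m : ℕ) :
    ∑ i ∈ range k, lam i ≤ k * m + ∑ i ∈ range ℓ, (lam i - m) :=
  calc ∑ i ∈ range k, lam i ≤ ∑ i ∈ range k, (m + (lam i - m)) :=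
        sum_le_sum fun _ _ => le_add_tsub
    _ = k * m + ∑ i ∈ range k, (lam i - m) := by
        rw [sum_add_distrib, sum_const, card_range, smul_eq_mul]
    _ ≤ k * m + ∑ i ∈ range (max k ℓ), (lam i - m) := by
        gcongr; exact le_max_left _ _
    _ = k * m + ∑ i ∈ range ℓ, (lam i - m) := by
        rw [eventually_constant_sum (fun i hi => by simp [hzero i hi]) (le_max_right _ _)]

end PartitionSums

theorem gerstenhaber_eq_greeneKleitman_general (n ℓ : ℕ) (lam : ℕ → ℕ)
    (I : Finset (ℕ × ℕ)) (hI : IsMatrixIdeal n I)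
    (hzero : ∀ i, ℓ ≤ i → lam i = 0)
    (hmono : ∀ i j : ℕ, i ≤ j → lam j ≤ lam i)
    (hbound : ∀ x ∈ idealSubmoduleM n I, ∀ k : ℕ,
      (x ^ k).rank ≤ ∑ i ∈ Finset.range ℓ, (lam i - k))
    (hattained : ∃ x ∈ idealSubmoduleM n I, ∀ k : ℕ,
      (x ^ k).rank = ∑ i ∈ Finset.range ℓ, (lam i - k)) :
    ∀ k : ℕ,
      IsGreatest
        {c : ℕ | ∃ C : Fin k → Finset ℕ, (∀ r, IsChainInP n I (C r)) ∧
          (Finset.univ.biUnion C).card = c}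
        (∑ i ∈ Finset.range k, lam i) := by
  intro k
  set U := greedy I k (n + 1)
  have hU : U ⊆ Icc 1 (n + 1) := greedy_subset_Icc _
  have hwin : ∀ b c, 1 ≤ b → c ≤ n + 1 → (b, c) ∉ I → #(U ∩ Icc b c) ≤ k :=
    fun b c hb hc hbc => card_greedy_inter_Icc_le hI hb hc hc hbc
  obtain ⟨m, S, hS, hSm, hcount⟩ := exists_antichain_cover hI k (le_refl (n + 1))
  rw [inter_eq_left.2 hU] at hcount
  have hU_le : #U ≤ ∑ i ∈ range k, lam i := by
    obtain ⟨x, hx, hrank⟩ := exists_mem_idealSubmoduleM_card_le_rank_pow hU hwin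
    calc #U ≤ (x ^ lam k).rank + k * lam k := hrank _
      _ ≤ ∑ i ∈ range ℓ, (lam i - lam k) + k * lam k := Nat.add_le_add_right (hbound x hx _) _
      _ = ∑ i ∈ range k, lam i := sum_range_tsub_add_mul_eq hmono hzero k
  have hle_U : ∑ i ∈ range k, lam i ≤ #U := by
    obtain ⟨x, hx, hrank⟩ := hattained
    have := rank_pow_add_card_le_of_mem_idealSubmoduleM hI hx hS hSm
    have := sum_range_le_mul_add_sum_tsub hzero k m
    rw [← hrank] at this
    omega
  obtain ⟨C, hC, hCU⟩ := exists_chains_biUnion_eq_of_window hI hU hwin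
  refine ⟨⟨C, hC, by rw [hCU]; omega⟩, ?_⟩
  rintro c ⟨C', hC', rfl⟩
  have := card_biUnion_add_card_le hC' hS hSm
  rw [Fintype.card_fin, Nat.card_Icc] at this
  omega

/-- The Gerstenhaber partition `λ_I` (the generic Jordan type of the
ad-nilpotent ideal `I`) equals the Greene–Kleitman partition of the unit interval
order `P_I`: for every `k`, `λ_1 + ⋯ + λ_k` is the maximum cardinality of a union of
`k` chains in `P_I`. -/
theorem gerstenhaber_eq_greeneKleitman (n ℓ : ℕ) (lam : ℕ → ℕ)
    (I : Finset (ℕ × ℕ)) (hI : IsMatrixIdeal n I)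
    (hpos : ∀ i < ℓ, 0 < lam i) (hzero : ∀ i, ℓ ≤ i → lam i = 0)
    (hmono : ∀ i j : ℕ, i ≤ j → lam j ≤ lam i)
    (hsum : ∑ i ∈ Finset.range ℓ, lam i = n + 1)
    (hbound : ∀ x ∈ idealSubmoduleM n I, ∀ k : ℕ,
      (x ^ k).rank ≤ ∑ i ∈ Finset.range ℓ, (lam i - k))
    (hattained : ∃ x ∈ idealSubmoduleM n I, ∀ k : ℕ,
      (x ^ k).rank = ∑ i ∈ Finset.range ℓ, (lam i - k)) :
    ∀ k : ℕ,
      IsGreatest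
        {c : ℕ | ∃ C : Fin k → Finset ℕ, (∀ r, IsChainInP n I (C r)) ∧
          (Finset.univ.biUnion C).card = c}
        (∑ i ∈ Finset.range k, lam i) :=
  gerstenhaber_eq_greeneKleitman_general n ℓ lam I hI hzero hmono hbound hattained
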